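/- Let f, g be simple integrable functions on a charge space (Ω, F, μ) and let δ ≥ 0. Then ∫_δ^∞ |μ_f(t) − μ_g(t)| dt ≤ ∫_{{|f|>δ}∪{|g|>δ}} | |f| − |g| | dμ. -/
import Mathlib


open Set ENNReal MeasureTheory

def IsSetField {Ω : Type*} (𝓕 : Set (Set Ω)) : Prop :=
  Set.univ ∈ 𝓕 ∧ (∀ A B : Set Ω, A ∈ 𝓕 → B ∈ 𝓕 → A ∪ B ∈ 𝓕) ∧
    (∀ A B : Set Ω, A ∈ 𝓕 → B ∈ 𝓕 → A \ B ∈ 𝓕)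

def IsCharge {Ω : Type*} (𝓕 : Set (Set Ω)) (μ : Set Ω → ℝ≥0∞) : Prop :=
  μ ∅ = 0 ∧ ∀ A B : Set Ω, A ∈ 𝓕 → B ∈ 𝓕 → Disjoint A B → μ (A ∪ B) = μ A + μ B

noncomputable def outerCharge {Ω : Type*} (𝓕 : Set (Set Ω)) (μ : Set Ω → ℝ≥0∞)
    (E : Set Ω) : ℝ≥0∞ :=
  ⨅ (F : Set Ω) (_ : F ∈ 𝓕) (_ : E ⊆ F), μ F

/-- `f` is a simple integrable function: finitely many values, each nonzero value
taken on a set of the field of finite charge. -/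
def IsSimpleInt {Ω : Type*} (𝓕 : Set (Set Ω)) (μ : Set Ω → ℝ≥0∞) (f : Ω → ℝ) : Prop :=
  (Set.range f).Finite ∧ ∀ c : ℝ, c ≠ 0 → {ω | f ω = c} ∈ 𝓕 ∧ μ {ω | f ω = c} ≠ ∞

/-- The charge integral of a nonnegative simple function,
`∫ f dμ = ∑_c c · μ({f = c})`. -/
noncomputable def chargeIntegral {Ω : Type*} (μ : Set Ω → ℝ≥0∞) (f : Ω → ℝ) : ℝ≥0∞ :=
  ∑' c : ℝ, ENNReal.ofReal c * μ {ω | f ω = c}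

/-- The absolute difference in `ℝ≥0∞`. -/
noncomputable def absd (a b : ℝ≥0∞) : ℝ≥0∞ := (a - b) ⊔ (b - a)

section Aux

variable {Ω : Type*} {𝓕 : Set (Set Ω)} {μ : Set Ω → ℝ≥0∞}

lemma field_empty (hF : IsSetField 𝓕) : (∅ : Set Ω) ∈ 𝓕 := by
  have := hF.2.2 Set.univ Set.univ hF.1 hF.1
  rwa [Set.diff_self] at this

lemma field_inter (hF : IsSetField 𝓕) {A B : Set Ω} (hA : A ∈ 𝓕) (hB : B ∈ 𝓕) :
    A ∩ B ∈ 𝓕 := by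
  have := hF.2.2 A (A \ B) hA (hF.2.2 A B hA hB)
  rwa [Set.diff_diff_right_self] at this

lemma field_biUnion (hF : IsSetField 𝓕) {ι : Type*} (s : Finset ι) (A : ι → Set Ω)
    (hmem : ∀ i ∈ s, A i ∈ 𝓕) : (⋃ i ∈ s, A i) ∈ 𝓕 := by
  classical
  induction s using Finset.cons_induction with
  | empty => simpa using field_empty hF
  | cons a s ha ih =>
    rw [show (⋃ i ∈ Finset.cons a s ha, A i) = A a ∪ ⋃ i ∈ s, A i by simp [Set.biUnion_insert]]
    exact hF.2.1 _ _ (hmem a (Finset.mem_cons_self a s))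
      (ih fun i hi => hmem i (Finset.mem_cons_of_mem hi))

lemma charge_mono (hF : IsSetField 𝓕) (hμ : IsCharge 𝓕 μ) {A B : Set Ω}
    (hA : A ∈ 𝓕) (hB : B ∈ 𝓕) (hAB : A ⊆ B) : μ A ≤ μ B := by
  have h1 : A ∪ B \ A = B := Set.union_diff_cancel hAB
  have h2 := hμ.2 A (B \ A) hA (hF.2.2 B A hB hA) disjoint_sdiff_self_right
  rw [h1] at h2
  exact h2 ▸ le_self_add

lemma outerCharge_eq_charge (hF : IsSetField 𝓕) (hμ : IsCharge 𝓕 μ) {A : Set Ω}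
    (hA : A ∈ 𝓕) : outerCharge 𝓕 μ A = μ A := by
  refine le_antisymm ?_ ?_
  · exact iInf₂_le_of_le A hA (iInf_le_of_le subset_rfl le_rfl)
  · exact le_iInf fun F => le_iInf fun hFm => le_iInf fun hsub =>
      charge_mono hF hμ hA hFm hsub

lemma charge_biUnion (hF : IsSetField 𝓕) (hμ : IsCharge 𝓕 μ) {ι : Type*} (s : Finset ι)
    (A : ι → Set Ω) (hmem : ∀ i ∈ s, A i ∈ 𝓕)
    (hdis : ∀ i ∈ s, ∀ j ∈ s, i ≠ j → Disjoint (A i) (A j)) :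
    μ (⋃ i ∈ s, A i) = ∑ i ∈ s, μ (A i) := by
  classical
  induction s using Finset.cons_induction with
  | empty => simpa using hμ.1
  | cons a s ha ih =>
    rw [show (⋃ i ∈ Finset.cons a s ha, A i) = A a ∪ ⋃ i ∈ s, A i by simp [Set.biUnion_insert], Finset.sum_cons]
    rw [hμ.2 (A a) (⋃ i ∈ s, A i) (hmem a (Finset.mem_cons_self a s))
      (field_biUnion hF s A fun i hi => hmem i (Finset.mem_cons_of_mem hi))
      (Set.disjoint_iUnion₂_right.mpr fun i hi =>
        hdis a (Finset.mem_cons_self a s) i (Finset.mem_cons_of_mem hi)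
          (fun h => ha (h ▸ hi)))]
    rw [ih (fun i hi => hmem i (Finset.mem_cons_of_mem hi))
      (fun i hi j hj hij => hdis i (Finset.mem_cons_of_mem hi) j
        (Finset.mem_cons_of_mem hj) hij)]

end Aux


section Aux2

variable {Ω : Type*} {𝓕 : Set (Set Ω)} {μ : Set Ω → ℝ≥0∞}

lemma absd_add_le (s u v : ℝ≥0∞) : absd (s + u) (s + v) ≤ u + v := by
  rw [absd]
  refine sup_le (tsub_le_iff_left.mpr ?_) (tsub_le_iff_left.mpr ?_)
  · exact add_le_add (self_le_add_right s v) (self_le_add_right u v)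
  · rw [add_comm u v]
    exact add_le_add (self_le_add_right s u) (self_le_add_right v u)

lemma levelset_abs_mem (hF : IsSetField 𝓕)
    {f : Ω → ℝ}
    (hfc : ∀ c : ℝ, c ≠ 0 → {ω | f ω = c} ∈ 𝓕 ∧ μ {ω | f ω = c} ≠ ∞)
    {c : ℝ} (hc : c ≠ 0) : {ω | |f ω| = c} ∈ 𝓕 := by
  rcases lt_or_gt_of_ne hc with h | h
  · have : {ω | |f ω| = c} = ∅ := by
      ext ω; simp only [Set.mem_setOf_eq, Set.mem_empty_iff_false, iff_false]
      intro hω; exact absurd (hω ▸ abs_nonneg (f ω)) (not_le.mpr h)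
    rw [this]; exact field_empty hF
  · have : {ω | |f ω| = c} = {ω | f ω = c} ∪ {ω | f ω = -c} := by
      ext ω; simp only [Set.mem_setOf_eq, Set.mem_union]
      exact abs_eq h.le
    rw [this]
    exact hF.2.1 _ _ (hfc c hc).1 (hfc (-c) (neg_ne_zero.mpr hc)).1

lemma levelset_abs_zero_mem (hF : IsSetField 𝓕)
    {f : Ω → ℝ} (hfr : (Set.range f).Finite)
    (hfc : ∀ c : ℝ, c ≠ 0 → {ω | f ω = c} ∈ 𝓕 ∧ μ {ω | f ω = c} ≠ ∞) :
    {ω | |f ω| = 0} ∈ 𝓕 := by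
  classical
  have : {ω | |f ω| = 0} =
      Set.univ \ ⋃ c ∈ hfr.toFinset.filter (· ≠ 0), {ω | f ω = c} := by
    ext ω
    simp only [Set.mem_setOf_eq, Set.mem_diff, Set.mem_univ, true_and, Set.mem_iUnion,
      Finset.mem_filter, Set.Finite.mem_toFinset, abs_eq_zero, not_exists]
    constructor
    · rintro h c ⟨_, hc0⟩ hfc'; exact hc0 (hfc' ▸ h ▸ rfl)
    · intro h
      by_contra h0
      exact h (f ω) ⟨⟨ω, rfl⟩, h0⟩ rfl
  rw [this]
  exact hF.2.2 _ _ hF.1 (field_biUnion hF _ _ fun c hc =>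
    (hfc c (Finset.mem_filter.mp hc).2).1)

lemma levelset_abs_mem' (hF : IsSetField 𝓕)
    {f : Ω → ℝ} (hfr : (Set.range f).Finite)
    (hfc : ∀ c : ℝ, c ≠ 0 → {ω | f ω = c} ∈ 𝓕 ∧ μ {ω | f ω = c} ≠ ∞)
    (c : ℝ) : {ω | |f ω| = c} ∈ 𝓕 := by
  rcases eq_or_ne c 0 with rfl | hc
  · exact levelset_abs_zero_mem hF hfr hfc
  · exact levelset_abs_mem hF hfc hc

end Aux2


/-- For simple integrable `f, g` and `δ ≥ 0`,
`∫_δ^∞ |μ_f(t) − μ_g(t)| dt ≤ ∫_{{|f|>δ}∪{|g|>δ}} ||f| − |g|| dμ`. -/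
theorem lintegral_absd_distribution_le_of_delta {Ω : Type*} (𝓕 : Set (Set Ω))
    (μ : Set Ω → ℝ≥0∞) (hF : IsSetField 𝓕) (hμ : IsCharge 𝓕 μ) (f g : Ω → ℝ)
    (hf : IsSimpleInt 𝓕 μ f) (hg : IsSimpleInt 𝓕 μ g) (δ : ℝ) (hδ : 0 ≤ δ) :
    ∫⁻ t in Set.Ioi δ,
        absd (outerCharge 𝓕 μ {ω | t < |f ω|}) (outerCharge 𝓕 μ {ω | t < |g ω|})
      ≤ chargeIntegral μ
          (Set.indicator ({ω | δ < |f ω|} ∪ {ω | δ < |g ω|})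
            (fun ω => |(|f ω| - |g ω|)|)) := by
  classical
  obtain ⟨hfr, hfc⟩ := hf
  obtain ⟨hgr, hgc⟩ := hg
  set h : Ω → ℝ := Set.indicator ({ω | δ < |f ω|} ∪ {ω | δ < |g ω|})
    (fun ω => |(|f ω| - |g ω|)|) with hhdef
  have hFr : (Set.range fun ω => |f ω|).Finite :=
    (hfr.image abs).subset (by rintro _ ⟨ω, rfl⟩; exact ⟨f ω, ⟨ω, rfl⟩, rfl⟩)
  have hGr : (Set.range fun ω => |g ω|).Finite :=
    (hgr.image abs).subset (by rintro _ ⟨ω, rfl⟩; exact ⟨g ω, ⟨ω, rfl⟩, rfl⟩)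
  set S : Finset ℝ := (hFr.union hGr).toFinset with hSdef
  have hfS : ∀ ω, |f ω| ∈ S := fun ω => by
    rw [hSdef, Set.Finite.mem_toFinset]; exact Or.inl ⟨ω, rfl⟩
  have hgS : ∀ ω, |g ω| ∈ S := fun ω => by
    rw [hSdef, Set.Finite.mem_toFinset]; exact Or.inr ⟨ω, rfl⟩
  set E : ℝ × ℝ → Set Ω := fun p => {ω | |f ω| = p.1 ∧ |g ω| = p.2} with hEdef
  have hEdis : ∀ p q : ℝ × ℝ, p ≠ q → Disjoint (E p) (E q) := by
    intro p q hpq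
    rw [Set.disjoint_left]
    rintro ω ⟨h1, h2⟩ ⟨h3, h4⟩
    exact hpq (Prod.ext (h1.symm.trans h3) (h2.symm.trans h4))
  have hEmem : ∀ p : ℝ × ℝ, E p ∈ 𝓕 := by
    intro p
    have : E p = {ω | |f ω| = p.1} ∩ {ω | |g ω| = p.2} := rfl
    rw [this]
    exact field_inter hF (levelset_abs_mem' hF hfr hfc p.1)
      (levelset_abs_mem' hF hgr hgc p.2)
  set v : ℝ × ℝ → ℝ := fun p => if δ < p.1 ⊔ p.2 then |p.1 - p.2| else 0 with hvdef
  have hval : ∀ ω, h ω = v (|f ω|, |g ω|) := by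
    intro ω
    by_cases hc : δ < |f ω| ⊔ |g ω|
    · rw [hhdef, Set.indicator_of_mem]
      · simp only [hvdef, hc, if_true]
      · exact lt_sup_iff.mp hc
    · rw [hhdef, Set.indicator_of_notMem]
      · simp only [hvdef, hc, if_false]
      · intro hmem
        exact hc (lt_sup_iff.mpr hmem)
  -- Step A : pointwise bound
  have key : ∀ t ∈ Set.Ioi δ,
      absd (outerCharge 𝓕 μ {ω | t < |f ω|}) (outerCharge 𝓕 μ {ω | t < |g ω|})
        ≤ ∑ p ∈ S ×ˢ S, (Set.Ico (p.1 ⊓ p.2) (p.1 ⊔ p.2)).indicator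
            (fun _ => μ (E p)) t := by
    intro t _
    set A := (S ×ˢ S).filter (fun p => t < p.1) with hAdef
    set B := (S ×ˢ S).filter (fun p => t < p.2) with hBdef
    have hUf : {ω | t < |f ω|} = ⋃ p ∈ A, E p := by
      ext ω
      simp only [Set.mem_setOf_eq, Set.mem_iUnion, exists_prop]
      constructor
      · intro hω
        exact ⟨(|f ω|, |g ω|),
          Finset.mem_filter.mpr ⟨Finset.mem_product.mpr ⟨hfS ω, hgS ω⟩, hω⟩, rfl, rfl⟩
      · rintro ⟨p, hp, h1, _⟩
        exact h1 ▸ (Finset.mem_filter.mp hp).2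
    have hUg : {ω | t < |g ω|} = ⋃ p ∈ B, E p := by
      ext ω
      simp only [Set.mem_setOf_eq, Set.mem_iUnion, exists_prop]
      constructor
      · intro hω
        exact ⟨(|f ω|, |g ω|),
          Finset.mem_filter.mpr ⟨Finset.mem_product.mpr ⟨hfS ω, hgS ω⟩, hω⟩, rfl, rfl⟩
      · rintro ⟨p, hp, _, h2⟩
        exact h2 ▸ (Finset.mem_filter.mp hp).2
    rw [hUf, hUg,
      outerCharge_eq_charge hF hμ (field_biUnion hF A E fun p _ => hEmem p),
      outerCharge_eq_charge hF hμ (field_biUnion hF B E fun p _ => hEmem p),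
      charge_biUnion hF hμ A E (fun p _ => hEmem p) (fun i _ j _ hij => hEdis i j hij),
      charge_biUnion hF hμ B E (fun p _ => hEmem p) (fun i _ j _ hij => hEdis i j hij)]
    calc absd (∑ p ∈ A, μ (E p)) (∑ p ∈ B, μ (E p))
        = absd (∑ p ∈ A ∩ B, μ (E p) + ∑ p ∈ A \ B, μ (E p))
               (∑ p ∈ A ∩ B, μ (E p) + ∑ p ∈ B \ A, μ (E p)) := by
          rw [Finset.sum_inter_add_sum_sdiff, Finset.inter_comm,
            Finset.sum_inter_add_sum_sdiff]
      _ ≤ ∑ p ∈ A \ B, μ (E p) + ∑ p ∈ B \ A, μ (E p) := absd_add_le _ _ _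
      _ = ∑ p ∈ (A \ B) ∪ (B \ A), μ (E p) :=
          (Finset.sum_union disjoint_sdiff_sdiff).symm
      _ = ∑ p ∈ (A \ B) ∪ (B \ A),
            (Set.Ico (p.1 ⊓ p.2) (p.1 ⊔ p.2)).indicator (fun _ => μ (E p)) t := by
          refine Finset.sum_congr rfl fun p hp => ?_
          rw [Set.indicator_of_mem]
          rcases Finset.mem_union.mp hp with hm | hm
          · obtain ⟨hA', hB'⟩ := Finset.mem_sdiff.mp hm
            have h1 : t < p.1 := (Finset.mem_filter.mp hA').2
            have h2 : p.2 ≤ t := by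
              by_contra hcon
              exact hB' (Finset.mem_filter.mpr
                ⟨(Finset.mem_filter.mp hA').1, not_le.mp hcon⟩)
            exact ⟨le_trans (min_le_right _ _) h2, lt_of_lt_of_le h1 (le_max_left _ _)⟩
          · obtain ⟨hB', hA'⟩ := Finset.mem_sdiff.mp hm
            have h2 : t < p.2 := (Finset.mem_filter.mp hB').2
            have h1 : p.1 ≤ t := by
              by_contra hcon
              exact hA' (Finset.mem_filter.mpr
                ⟨(Finset.mem_filter.mp hB').1, not_le.mp hcon⟩)
            exact ⟨le_trans (min_le_left _ _) h1, lt_of_lt_of_le h2 (le_max_right _ _)⟩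
      _ ≤ ∑ p ∈ S ×ˢ S,
            (Set.Ico (p.1 ⊓ p.2) (p.1 ⊔ p.2)).indicator (fun _ => μ (E p)) t := by
          refine Finset.sum_le_sum_of_subset ?_
          intro p hp
          rcases Finset.mem_union.mp hp with hm | hm
          · exact (Finset.mem_filter.mp (Finset.mem_sdiff.mp hm).1).1
          · exact (Finset.mem_filter.mp (Finset.mem_sdiff.mp hm).1).1
  -- Step B : integral of the bound
  have intbound : ∫⁻ t in Set.Ioi δ, ∑ p ∈ S ×ˢ S,
      (Set.Ico (p.1 ⊓ p.2) (p.1 ⊔ p.2)).indicator (fun _ => μ (E p)) t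
      ≤ ∑ p ∈ S ×ˢ S, ENNReal.ofReal (v p) * μ (E p) := by
    rw [lintegral_finset_sum _ (fun p _ => measurable_const.indicator measurableSet_Ico)]
    refine Finset.sum_le_sum fun p _ => ?_
    rw [lintegral_indicator measurableSet_Ico, setLIntegral_const,
      Measure.restrict_apply measurableSet_Ico]
    by_cases hc : δ < p.1 ⊔ p.2
    · rw [mul_comm]
      refine mul_le_mul_left ?_ _
      calc volume (Set.Ico (p.1 ⊓ p.2) (p.1 ⊔ p.2) ∩ Set.Ioi δ)
          ≤ volume (Set.Ico (p.1 ⊓ p.2) (p.1 ⊔ p.2)) := measure_mono Set.inter_subset_left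
        _ = ENNReal.ofReal (p.1 ⊔ p.2 - p.1 ⊓ p.2) := Real.volume_Ico
        _ = ENNReal.ofReal (v p) := by
            rw [max_sub_min_eq_abs]
            simp only [hvdef, hc, if_true, abs_sub_comm]
    · have hequal : Set.Ico (p.1 ⊓ p.2) (p.1 ⊔ p.2) ∩ Set.Ioi δ = ∅ := by
        ext t
        simp only [Set.mem_inter_iff, Set.mem_Ico, Set.mem_Ioi,
          Set.mem_empty_iff_false, iff_false, not_and]
        rintro ⟨_, h2⟩ h3
        exact hc (h3.trans h2)
      rw [hequal]
      simp
  -- Step C : value of the charge integral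
  have hsupport : ∀ c ∉ (S ×ˢ S).image v,
      ENNReal.ofReal c * μ {ω | h ω = c} = 0 := by
    intro c hc
    have : {ω | h ω = c} = ∅ := by
      ext ω
      simp only [Set.mem_setOf_eq, Set.mem_empty_iff_false, iff_false]
      intro hω
      exact hc (Finset.mem_image.mpr ⟨(|f ω|, |g ω|),
        Finset.mem_product.mpr ⟨hfS ω, hgS ω⟩, ((hval ω).symm.trans hω)⟩)
    rw [this, hμ.1, mul_zero]
  have hRHS : chargeIntegral μ h = ∑ p ∈ S ×ˢ S, ENNReal.ofReal (v p) * μ (E p) := by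
    rw [chargeIntegral, tsum_eq_sum hsupport,
      ← Finset.sum_fiberwise_of_maps_to (fun p hp => Finset.mem_image_of_mem v hp)
        (fun p => ENNReal.ofReal (v p) * μ (E p))]
    refine Finset.sum_congr rfl fun c hc => ?_
    rcases eq_or_ne c 0 with rfl | hc0
    · simp only [ENNReal.ofReal_zero, zero_mul]
      symm
      refine Finset.sum_eq_zero fun p hp => ?_
      rw [(Finset.mem_filter.mp hp).2, ENNReal.ofReal_zero, zero_mul]
    · have hset : {ω | h ω = c} = ⋃ p ∈ (S ×ˢ S).filter (fun p => v p = c), E p := by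
        ext ω
        simp only [Set.mem_setOf_eq, Set.mem_iUnion, exists_prop]
        constructor
        · intro hω
          exact ⟨(|f ω|, |g ω|),
            Finset.mem_filter.mpr ⟨Finset.mem_product.mpr ⟨hfS ω, hgS ω⟩,
              (hval ω).symm.trans hω⟩, rfl, rfl⟩
        · rintro ⟨p, hp, h1, h2⟩
          rw [hval ω, show (|f ω|, |g ω|) = p from Prod.ext h1 h2]
          exact (Finset.mem_filter.mp hp).2
      rw [hset, charge_biUnion hF hμ _ E (fun p _ => hEmem p)
        (fun i _ j _ hij => hEdis i j hij), Finset.mul_sum]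
      refine Finset.sum_congr rfl fun p hp => ?_
      rw [(Finset.mem_filter.mp hp).2]
  calc ∫⁻ t in Set.Ioi δ,
        absd (outerCharge 𝓕 μ {ω | t < |f ω|}) (outerCharge 𝓕 μ {ω | t < |g ω|})
      ≤ ∫⁻ t in Set.Ioi δ, ∑ p ∈ S ×ˢ S,
          (Set.Ico (p.1 ⊓ p.2) (p.1 ⊔ p.2)).indicator (fun _ => μ (E p)) t :=
        setLIntegral_mono (Finset.measurable_sum _
          (fun p _ => measurable_const.indicator measurableSet_Ico)) key
    _ ≤ ∑ p ∈ S ×ˢ S, ENNReal.ofReal (v p) * μ (E p) := intbound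
    _ = chargeIntegral μ h := hRHS.symm
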